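/- arXiv:2408.05377 — 3 statements merged into one kernel-verified Lean document; each statement's English description precedes it below -/
import Mathlib

section
/- Every sorted sock sequence (i.e., every word avoiding the pattern aba) lies in the image of the map φ_aba. -/
/-- A word `w` contains the pattern `aba`: there are indices `i < j < k`
with `w_i = w_k ≠ w_j`. A word avoiding this pattern is called *sorted*. -/
def ContainsAba (w : List ℕ) : Prop :=
  ∃ k < w.length, ∃ j < k, ∃ i < j, w.getD i 0 = w.getD k 0 ∧ w.getD i 0 ≠ w.getD j 0

instance : DecidablePred ContainsAba := fun w => by
  unfold ContainsAba; infer_instance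

/-- Run a stack-sorting machine on input `w` with current stack `stack`
(head of the list = top of the stack): `ok` tests admissibility of the stack
contents read from top to bottom.  At each step, if pushing the next input
letter keeps the stack admissible, push it; otherwise pop the top letter of the
stack and append it to the output; when the input is exhausted, pop all
remaining stack letters to the output.  The returned list is the output. -/
def stackRun (ok : List ℕ → Bool) : List ℕ → List ℕ → List ℕ
  | [], stack => stack
  | x :: rest, stack =>
    if ok (x :: stack) then stackRun ok rest (x :: stack)
    else
      match stack with
      | [] => stackRun ok rest [x]
      | t :: s => t :: stackRun ok (x :: rest) s
termination_by input stack => 2 * input.length + stack.length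
decreasing_by all_goals (simp [List.length_cons]; try omega)

/-- The stack-sorting map `φ_aba`: the stack, read from top to bottom,
must avoid the pattern `aba` at all times. -/
def phiAba (w : List ℕ) : List ℕ := stackRun (fun s => !decide (ContainsAba s)) w []

lemma stackRun_no_pop (ok : List ℕ → Bool) :
    ∀ (input stack : List ℕ),
      (∀ n, n < input.length → ok ((input.take (n+1)).reverse ++ stack) = true) →
      stackRun ok input stack = input.reverse ++ stack := by
  intro input
  induction input with
  | nil => intro stack _; simp [stackRun]
  | cons x rest ih =>
    intro stack h
    have h0 := h 0 (by simp)
    simp only [List.take_succ_cons, List.take_zero, List.reverse_cons,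
      List.reverse_nil, List.nil_append, List.cons_append] at h0
    rw [stackRun.eq_def]
    simp only [if_pos h0]
    rw [ih (x :: stack) ?_]
    · simp
    · intro n hn
      have := h (n+1) (by simpa using Nat.succ_lt_succ hn)
      simpa [List.append_assoc] using this

lemma containsAba_append_left (p l : List ℕ) (h : ContainsAba l) :
    ContainsAba (p ++ l) := by
  obtain ⟨k, hk, j, hj, i, hi, h1, h2⟩ := h
  have hg : ∀ m, m < l.length → (p ++ l).getD (p.length + m) 0 = l.getD m 0 := by
    intro m hm
    rw [List.getD_append_right _ _ _ _ (by omega)]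
    congr 1; omega
  refine ⟨p.length + k, by simp; omega, p.length + j, by omega, p.length + i, by omega, ?_, ?_⟩
  · rw [hg i (by omega), hg k hk]; exact h1
  · rw [hg i (by omega), hg j (by omega)]; exact h2

lemma not_containsAba_suffix {w l : List ℕ} (hw : ¬ ContainsAba w) (h : l <:+ w) :
    ¬ ContainsAba l := by
  obtain ⟨p, rfl⟩ := h
  exact fun hl => hw (containsAba_append_left p l hl)

/-- every sorted sock sequence (word avoiding the pattern `aba`)
lies in the image of `φ_aba`. -/
theorem sorted_mem_image_phiAba (w : List ℕ) (hw : ¬ ContainsAba w) :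
    ∃ s : List ℕ, phiAba s = w := by
  refine ⟨w.reverse, ?_⟩
  unfold phiAba
  rw [stackRun_no_pop]
  · simp
  · intro n _
    simp only [List.append_nil, Bool.not_eq_true', decide_eq_false_iff_not]
    refine not_containsAba_suffix hw ?_
    refine ⟨(w.reverse.drop (n+1)).reverse, ?_⟩
    rw [← List.reverse_append, List.take_append_drop, List.reverse_reverse]
end

section
/- Let r_1, r_2, …, r_{p-1} be sock sequences, each lying in the image of φ_aba, and let x be a letter that does not occur in any of r_1, …, r_{p-1}. Then the concatenation r_1 r_2 ⋯ r_{p-1} x^{p-1} (the r_k in order, followed by p−1 copies of x) lies in the image of φ_aba. -/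
abbrev okAba : List ℕ → Bool := fun s => !decide (ContainsAba s)

-- simp-style unfolding lemmas
lemma stackRun_nil (ok : List ℕ → Bool) (st : List ℕ) : stackRun ok [] st = st := by
  simp [stackRun]

lemma stackRun_cons_push (ok : List ℕ → Bool) {a : ℕ} {st : List ℕ} (rest : List ℕ)
    (h : ok (a :: st) = true) :
    stackRun ok (a :: rest) st = stackRun ok rest (a :: st) := by
  rw [stackRun.eq_def]; simp [h]

lemma stackRun_cons_pop (ok : List ℕ → Bool) {a t : ℕ} {s : List ℕ} (rest : List ℕ)
    (h : ok (a :: t :: s) = false) :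
    stackRun ok (a :: rest) (t :: s) = t :: stackRun ok (a :: rest) s := by
  rw [stackRun.eq_def]; simp [h]

lemma not_containsAba_short {w : List ℕ} (h : w.length ≤ 2) : ¬ ContainsAba w := by
  rintro ⟨k, hk, j, hj, i, hi, -, -⟩; omega

lemma containsAba_append_replicate {x : ℕ} {l : List ℕ} (hx : x ∉ l) (m : ℕ) :
    ContainsAba (l ++ List.replicate m x) ↔ ContainsAba l := by
  constructor
  · rintro ⟨k, hk, j, hj, i, hi, h1, h2⟩
    by_cases hkl : k < l.length
    · refine ⟨k, hkl, j, hj, i, hi, ?_, ?_⟩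
      · rwa [List.getD_append _ _ _ _ (by omega), List.getD_append _ _ _ _ hkl] at h1
      · rwa [List.getD_append _ _ _ _ (by omega), List.getD_append _ _ _ _ (by omega)] at h2
    · exfalso
      push_neg at hkl
      have hklen : k < l.length + m := by simpa using hk
      have hkx : (l ++ List.replicate m x).getD k 0 = x := by
        rw [List.getD_append_right _ _ _ _ hkl, List.getD_eq_getElem _ _ (by simp; omega)]
        simp
      have hil : ¬ i < l.length := by
        intro hil
        have : (l ++ List.replicate m x).getD i 0 = l.getD i 0 :=
          List.getD_append _ _ _ _ hil
        have hmem : l.getD i 0 ∈ l := by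
          rw [List.getD_eq_getElem _ _ hil]; exact List.getElem_mem _
        rw [h1, hkx] at this
        exact hx (this ▸ hmem)
      push_neg at hil
      have hjx : (l ++ List.replicate m x).getD j 0 = x := by
        rw [List.getD_append_right _ _ _ _ (by omega), List.getD_eq_getElem _ _ (by simp; omega)]
        simp
      rw [h1, hkx, hjx] at h2
      exact h2 rfl
  · rintro ⟨k, hk, j, hj, i, hi, h1, h2⟩
    refine ⟨k, by simp; omega, j, hj, i, hi, ?_, ?_⟩
    · rwa [List.getD_append _ _ _ _ (by omega), List.getD_append _ _ _ _ hk]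
    · rwa [List.getD_append _ _ _ _ (by omega), List.getD_append _ _ _ _ (by omega)]

lemma containsAba_sep {x t : ℕ} {s : List ℕ} (hm : 1 ≤ m) (ht : t ≠ x) :
    ContainsAba (x :: (t :: s) ++ List.replicate m x) := by
  refine ⟨s.length + 2, by simp; omega, 1, by omega, 0, by omega, ?_, ?_⟩
  · simp only [List.cons_append]
    have : (x :: t :: (s ++ List.replicate m x)).getD (s.length + 2) 0
        = (s ++ List.replicate m x).getD s.length 0 := rfl
    rw [this, List.getD_append_right _ _ _ _ (le_refl _)]
    simp only [Nat.sub_self]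
    simp [List.getElem?_replicate, show 0 < m from hm]
  · show x ≠ t
    exact fun h => ht h.symm

lemma stackRun_cons_nilpop (ok : List ℕ → Bool) {a : ℕ} (rest : List ℕ)
    (h : ok [a] = false) :
    stackRun ok (a :: rest) [] = stackRun ok rest [a] := by
  rw [stackRun.eq_def]; simp [h]

lemma okAba_append_replicate {x : ℕ} {l : List ℕ} (hx : x ∉ l) (m : ℕ) :
    okAba (l ++ List.replicate m x) = okAba l := by
  simp [okAba, containsAba_append_replicate hx]

lemma okAba_singleton (a : ℕ) : okAba [a] = true := by
  simp only [okAba, Bool.not_eq_true', decide_eq_false_iff_not]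
  exact not_containsAba_short (by simp)

lemma okAba_sep {x t : ℕ} {s : List ℕ} {m : ℕ} (hm : 1 ≤ m) (ht : t ≠ x) :
    okAba (x :: (t :: s) ++ List.replicate m x) = false := by
  simp only [okAba, Bool.not_eq_false', decide_eq_true_iff]
  exact containsAba_sep hm ht

/-- L : a block of `x`'s at the bottom of the stack is transparent. -/
lemma stackRun_stack_replicate {x : ℕ} (m : ℕ) :
    ∀ (w st : List ℕ), x ∉ w → x ∉ st →
      stackRun okAba w (st ++ List.replicate m x)
        = stackRun okAba w st ++ List.replicate m x := by
  intro w
  induction w with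
  | nil => intro st _ _; simp [stackRun_nil]
  | cons a rest ih =>
    intro st hw
    simp only [List.mem_cons, not_or] at hw
    obtain ⟨hax, hrest⟩ := hw
    have hrest' : x ∉ rest := hrest
    induction st with
    | nil =>
      intro _
      have h1 : okAba (a :: List.replicate m x) = true := by
        have := okAba_append_replicate (x := x) (l := [a]) (by simp [hax]) m
        simpa [okAba_singleton] using this
      simp only [List.nil_append]
      rw [stackRun_cons_push _ _ h1, stackRun_cons_push _ _ (okAba_singleton a)]
      have := ih [a] hrest' (by simp [hax])
      simpa using this
    | cons t s ihs =>
      intro hst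
      simp only [List.mem_cons, not_or] at hst
      obtain ⟨htx, hs⟩ := hst
      have hok2 : okAba (a :: (t :: s) ++ List.replicate m x) = okAba (a :: t :: s) :=
        okAba_append_replicate (l := a :: t :: s) (by simp [hax, htx, hs]) m
      cases hok : okAba (a :: t :: s) with
      | true =>
        simp only [List.cons_append]
        rw [stackRun_cons_push _ _ (by simpa [hok] using hok2),
            stackRun_cons_push _ _ hok]
        have := ih (a :: t :: s) hrest' (by simp [hax, htx, hs])
        simpa using this
      | false =>
        simp only [List.cons_append]
        rw [stackRun_cons_pop _ _ (by simpa [hok] using hok2),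
            stackRun_cons_pop _ _ hok]
        have := ihs (by simp [hs])
        simp only [List.cons_append] at this ⊢
        rw [this]

/-- M' : hitting a separator `x` flushes the non-`x` part of the stack. -/
lemma stackRun_sep {x : ℕ} (w' : List ℕ) :
    ∀ (w st : List ℕ) (m : ℕ), x ∉ w → x ∉ st → 1 ≤ m →
      stackRun okAba (w ++ x :: w') (st ++ List.replicate m x)
        = stackRun okAba w st ++ stackRun okAba w' (List.replicate (m + 1) x) := by
  intro w
  induction w with
  | nil =>
    intro st m _ hst hm
    induction st with
    | nil =>
      have h1 : okAba (x :: List.replicate m x) = true := by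
        have := okAba_append_replicate (l := []) (x := x) (by simp) (m + 1)
        simpa [List.replicate_succ, okAba, not_containsAba_short (w := [])] using this
      simp only [List.nil_append]
      rw [stackRun_cons_push _ _ h1, stackRun_nil, List.replicate_succ]
      simp
    | cons t s ihs =>
      simp only [List.mem_cons, not_or] at hst
      obtain ⟨htx, hs⟩ := hst
      simp only [List.nil_append, List.cons_append]
      rw [stackRun_cons_pop _ _ (by
        have := okAba_sep (s := s) hm (fun h => htx h.symm)
        simpa using this)]
      have := ihs (by simp [hs])
      simp only [List.nil_append, stackRun_nil] at this ⊢
      rw [this, List.cons_append]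
  | cons a rest ih =>
    intro st m hw hst hm
    simp only [List.mem_cons, not_or] at hw
    obtain ⟨hax, hrest⟩ := hw
    have hrest' : x ∉ rest := hrest
    induction st with
    | nil =>
      have h1 : okAba (a :: List.replicate m x) = true := by
        have := okAba_append_replicate (x := x) (l := [a]) (by simp [hax]) m
        simpa [okAba_singleton] using this
      simp only [List.nil_append, List.cons_append]
      rw [stackRun_cons_push _ _ h1, stackRun_cons_push _ _ (okAba_singleton a)]
      have := ih [a] m hrest' (by simp [hax]) hm
      simpa using this
    | cons t s ihs =>
      simp only [List.mem_cons, not_or] at hst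
      obtain ⟨htx, hs⟩ := hst
      have hok2 : okAba (a :: (t :: s) ++ List.replicate m x) = okAba (a :: t :: s) :=
        okAba_append_replicate (l := a :: t :: s) (by simp [hax, htx, hs]) m
      cases hok : okAba (a :: t :: s) with
      | true =>
        simp only [List.cons_append]
        rw [stackRun_cons_push _ _ (by simpa [hok] using hok2),
            stackRun_cons_push _ _ hok]
        have := ih (a :: t :: s) m hrest' (by simp [hax, htx, hs]) hm
        simpa using this
      | false =>
        simp only [List.cons_append]
        rw [stackRun_cons_pop _ _ (by simpa [hok] using hok2),
            stackRun_cons_pop _ _ hok]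
        have := ihs (by simp [hs])
        simp only [List.cons_append] at this ⊢
        rw [this]

lemma mem_stackRun (ok : List ℕ → Bool) :
    ∀ (w st : List ℕ) (a : ℕ), a ∈ stackRun ok w st ↔ a ∈ w ∨ a ∈ st := by
  intro w
  induction w with
  | nil => intro st a; simp [stackRun_nil]
  | cons b rest ih =>
    intro st
    induction st with
    | nil =>
      intro a
      cases hok : ok [b] with
      | true =>
        rw [stackRun_cons_push _ _ hok]
        simp [ih]; tauto
      | false =>
        rw [stackRun_cons_nilpop _ _ hok]
        simp [ih]; tauto
    | cons t s ihs =>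
      intro a
      cases hok : ok (b :: t :: s) with
      | true =>
        rw [stackRun_cons_push _ _ hok]
        simp [ih]; tauto
      | false =>
        rw [stackRun_cons_pop _ _ hok]
        simp [ihs]; tauto

lemma claimC {x : ℕ} :
    ∀ (ss : List (List ℕ)) (s0 : List ℕ) (m : ℕ), 1 ≤ m →
      (∀ s ∈ ss, x ∉ s) → x ∉ s0 →
      stackRun okAba (s0 ++ (ss.map (x :: ·)).flatten) (List.replicate m x)
        = phiAba s0 ++ (ss.map phiAba).flatten ++ List.replicate (m + ss.length) x := by
  intro ss
  induction ss with
  | nil =>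
    intro s0 m hm _ hs0
    simp only [List.map_nil, List.flatten_nil, List.append_nil, List.length_nil, Nat.add_zero]
    have := stackRun_stack_replicate (x := x) m s0 [] hs0 (by simp)
    simpa [phiAba] using this
  | cons s' ss ih =>
    intro s0 m hm hss hs0
    have hs' : x ∉ s' := hss s' (by simp)
    have hss' : ∀ s ∈ ss, x ∉ s := fun s h => hss s (by simp [h])
    have hsep := stackRun_sep (x := x) (s' ++ (ss.map (x :: ·)).flatten) s0 [] m hs0 (by simp) hm
    simp only [List.nil_append] at hsep
    have hC := ih s' (m + 1) (by omega) hss' hs'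
    have harith : m + 1 + ss.length = m + (ss.length + 1) := by omega
    simp only [List.map_cons, List.flatten_cons, List.cons_append, List.length_cons]
    rw [hsep, hC, harith]
    simp [phiAba, List.append_assoc]

lemma exists_preimages {x : ℕ} :
    ∀ rs : List (List ℕ), (∀ r ∈ rs, ∃ s, phiAba s = r) → (∀ r ∈ rs, x ∉ r) →
      ∃ ss : List (List ℕ), ss.map phiAba = rs ∧ ∀ s ∈ ss, x ∉ s := by
  intro rs
  induction rs with
  | nil => intro _ _; exact ⟨[], by simp, by simp⟩
  | cons r rs ih =>
    intro himg hx
    obtain ⟨s, hs⟩ := himg r (by simp)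
    obtain ⟨ss, hss, hssx⟩ := ih (fun r h => himg r (by simp [h])) (fun r h => hx r (by simp [h]))
    refine ⟨s :: ss, by simp [hs, hss], ?_⟩
    intro s' h
    rcases List.mem_cons.mp h with h | h
    · subst h
      intro hxs
      have hmem : x ∈ phiAba s' := by
        have := (mem_stackRun okAba s' [] x).mpr (Or.inl hxs)
        simpa [phiAba] using this
      rw [hs] at hmem
      exact hx r (by simp) hmem
    · exact hssx s' h

/-- if `rs = [r_1, …, r_{p-1}]` is a list of sock sequences, each in
the image of `φ_aba`, and `x` is a letter occurring in none of them, then the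
concatenation `r_1 r_2 ⋯ r_{p-1}` followed by `p - 1` copies of `x` lies in the
image of `φ_aba`. -/
theorem concat_pow_mem_image_phiAba (rs : List (List ℕ)) (x : ℕ)
    (himg : ∀ r ∈ rs, ∃ s : List ℕ, phiAba s = r)
    (hx : ∀ r ∈ rs, x ∉ r) :
    ∃ s : List ℕ, phiAba s = rs.flatten ++ List.replicate rs.length x := by
  obtain ⟨ss, hmap, hssx⟩ := exists_preimages (x := x) rs himg hx
  subst hmap
  cases ss with
  | nil => exact ⟨[], by simp [phiAba, stackRun_nil]⟩
  | cons s0 ss' =>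
    refine ⟨((s0 :: ss').map (x :: ·)).flatten, ?_⟩
    have h1 : ((s0 :: ss').map (x :: ·)).flatten
        = x :: (s0 ++ (ss'.map (x :: ·)).flatten) := by simp
    rw [h1]
    have hpush : phiAba (x :: (s0 ++ (ss'.map (x :: ·)).flatten))
        = stackRun okAba (s0 ++ (ss'.map (x :: ·)).flatten) [x] := by
      show stackRun okAba _ [] = _
      exact stackRun_cons_push _ _ (okAba_singleton x)
    have hC := claimC (x := x) ss' s0 1 le_rfl (fun s h => hssx s (by simp [h]))
      (hssx s0 (by simp))
    simp only [List.replicate_one] at hC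
    rw [hpush, hC]
    simp [List.append_assoc, Nat.add_comm]
end

section
/- In the greedy left-to-right factorization of a sock sequence w into maximal blocks avoiding the pattern aba — obtained by repeatedly taking the longest prefix of the remaining word that avoids aba — no block boundary separates two equal adjacent letters; that is, whenever w_i = w_{i+1}, the positions i and i+1 lie in the same block. -/
/-- The length of the longest prefix of `w` that avoids the pattern `aba`. -/
def greedyBlockLen (w : List ℕ) : ℕ :=
  Nat.findGreatest (fun k => ¬ ContainsAba (w.take k)) w.length

lemma one_le_greedyBlockLen {w : List ℕ} (h : w ≠ []) : 1 ≤ greedyBlockLen w := by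
  apply Nat.le_findGreatest
  · exact Nat.one_le_iff_ne_zero.mpr (by simpa using h)
  · rintro ⟨k, hk, j, hj, i, hi, -⟩
    have : (w.take 1).length ≤ 1 := by simp [List.length_take]
    omega

/-- The greedy left-to-right factorization of `w` into blocks, obtained by
repeatedly taking the longest prefix of the remaining word that avoids the
pattern `aba`. -/
def greedyBlocks (w : List ℕ) : List (List ℕ) :=
  if h : w = [] then []
  else w.take (greedyBlockLen w) :: greedyBlocks (w.drop (greedyBlockLen w))
termination_by w.length
decreasing_by
  have h1 := one_le_greedyBlockLen h
  have h2 : 0 < w.length := List.length_pos_iff.mpr h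
  simp only [List.length_drop]
  omega

/-!
If `w_i = w_{i+1}` and the prefix `w_0 ⋯ w_i` avoids `aba`, then so does `w_0 ⋯ w_{i+1}`: an
occurrence ending at `i + 1` can be moved to end at `i`. Hence a longest `aba`-avoiding prefix never
has length `i + 1`. Applying this to each suffix at which the greedy factorization starts a new
block shows that no block ends between positions `i` and `i + 1`.
-/

theorem List.getD_take_of_lt {α : Type*} (l : List α) (d : α) {m n : ℕ} (h : m < n) :
    (l.take n).getD m d = l.getD m d := by
  simp [List.getD_eq_getElem?_getD, h]

theorem List.getD_drop {α : Type*} (l : List α) (d : α) (n m : ℕ) :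
    (l.drop n).getD m d = l.getD (n + m) d := by
  simp [List.getD_eq_getElem?_getD]

theorem containsAba_take_iff {w : List ℕ} {n : ℕ} :
    ContainsAba (w.take n) ↔ ∃ k < n, k < w.length ∧
      ∃ j < k, ∃ i < j, w.getD i 0 = w.getD k 0 ∧ w.getD i 0 ≠ w.getD j 0 := by
  simp only [ContainsAba, List.length_take, lt_min_iff]
  constructor
  · rintro ⟨k, ⟨hkn, hkw⟩, j, hj, i, hi, hik, hij⟩
    simp only [List.getD_take_of_lt w 0 (hi.trans hj |>.trans hkn),
      List.getD_take_of_lt w 0 (hj.trans hkn), List.getD_take_of_lt w 0 hkn] at hik hij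
    exact ⟨k, hkn, hkw, j, hj, i, hi, hik, hij⟩
  · rintro ⟨k, hkn, hkw, j, hj, i, hi, hik, hij⟩
    refine ⟨k, ⟨hkn, hkw⟩, j, hj, i, hi, ?_⟩
    simp only [List.getD_take_of_lt w 0 (hi.trans hj |>.trans hkn),
      List.getD_take_of_lt w 0 (hj.trans hkn), List.getD_take_of_lt w 0 hkn]
    exact ⟨hik, hij⟩

theorem ContainsAba.take_of_getD_eq {w : List ℕ} {i : ℕ} (heq : w.getD i 0 = w.getD (i + 1) 0)
    (h : ContainsAba (w.take (i + 2))) : ContainsAba (w.take (i + 1)) := by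
  rw [containsAba_take_iff] at h ⊢
  obtain ⟨k, hk, hkw, j, hj, a, ha, hak, haj⟩ := h
  obtain hki | rfl : k ≤ i ∨ k = i + 1 := by omega
  · exact ⟨k, by omega, hkw, j, hj, a, ha, hak, haj⟩
  · have hai : w.getD a 0 = w.getD i 0 := hak.trans heq.symm
    have hji : j < i := by
      refine lt_of_le_of_ne (by omega) ?_
      rintro rfl
      exact haj hai
    exact ⟨i, by omega, by omega, j, hji, a, ha, hai, haj⟩

theorem greedyBlockLen_le_length (w : List ℕ) : greedyBlockLen w ≤ w.length :=
  Nat.findGreatest_le _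

theorem greedyBlockLen_ne_of_getD_eq {w : List ℕ} {i : ℕ} (hi : i + 1 < w.length)
    (heq : w.getD i 0 = w.getD (i + 1) 0) : greedyBlockLen w ≠ i + 1 := by
  intro hlen
  obtain ⟨-, hsorted, hmax⟩ := Nat.findGreatest_eq_iff.mp hlen
  exact hmax (Nat.lt_succ_self _) hi fun h => hsorted (by omega) (h.take_of_getD_eq heq)

theorem greedyBlocks_of_ne_nil {w : List ℕ} (hw : w ≠ []) :
    greedyBlocks w = w.take (greedyBlockLen w) :: greedyBlocks (w.drop (greedyBlockLen w)) := by
  rw [greedyBlocks, dif_neg hw]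

theorem length_flatten_take_succ_greedyBlocks {w : List ℕ} (hw : w ≠ []) (t : ℕ) :
    ((greedyBlocks w).take (t + 1)).flatten.length =
      greedyBlockLen w + ((greedyBlocks (w.drop (greedyBlockLen w))).take t).flatten.length := by
  rw [greedyBlocks_of_ne_nil hw, List.take_succ_cons, List.flatten_cons, List.length_append,
    List.length_take, min_eq_left (greedyBlockLen_le_length w)]

theorem greedyBlocks_no_boundary_in_run_general (w : List ℕ) (i : ℕ)
    (hi : i + 1 < w.length) (heq : w.getD i 0 = w.getD (i + 1) 0)
    (t : ℕ) :
    (((greedyBlocks w).take t).flatten).length ≠ i + 1 := by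
  induction w using greedyBlocks.induct generalizing i t with
  | case1 => simp at hi
  | case2 w hw ih =>
    obtain _ | t := t
    · simp
    rw [length_flatten_take_succ_greedyBlocks hw]
    obtain hle | hlt := le_or_gt (greedyBlockLen w) i
    · have hrest := ih (i - greedyBlockLen w) (by simp; omega)
        (by rwa [List.getD_drop, List.getD_drop, Nat.add_sub_cancel' hle, ← add_assoc,
          Nat.add_sub_cancel' hle]) t
      omega
    · have := greedyBlockLen_ne_of_getD_eq hi heq
      omega

/-- in the greedy factorization of `w` into maximal `aba`-avoiding
blocks, no block boundary separates two equal adjacent letters: if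
`w_i = w_{i+1}`, then no nontrivial union of initial blocks has total length
exactly `i + 1`, i.e. positions `i` and `i + 1` lie in the same block. -/
theorem greedyBlocks_no_boundary_in_run (w : List ℕ) (i : ℕ)
    (hi : i + 1 < w.length) (heq : w.getD i 0 = w.getD (i + 1) 0)
    (t : ℕ) (ht0 : 0 < t) (ht : t < (greedyBlocks w).length) :
    (((greedyBlocks w).take t).flatten).length ≠ i + 1 :=
  greedyBlocks_no_boundary_in_run_general w i hi heq t
end
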